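/- Let I = {1,2} ⊆ L, let H_I be the subspace of H spanned by {f_∅, f_{(1)}, f_{(2)}, f_{(1,2)}}, and let U_I : H_I → H_I be the unitary with U_I f_∅ = f_{(1)}, U_I f_{(1)} = f_{(1,2)}, U_I f_{(1,2)} = f_{(2)}, U_I f_{(2)} = f_∅. Then, identifying a ∈ A(I) with its restriction a|_{H_I}, one has U_I* a_1 U_I = a_2*[a_1, a_1*], U_I a_1 U_I* = a_2[a_1, a_1*], U_I* a_2 U_I = a_1[a_2*, a_2], and U_I a_2 U_I* = a_1*[a_2, a_2*], where [x, y] = xy − yx. Moreover, for any λ ∈ [0,1] the map α(a) = λ U_I* a U_I + (1−λ) U_I a U_I* on A(I)|_{H_I} is even: it commutes with conjugation by the parity operator θ|_{H_I} (θ f_M = (−1)^{|M|} f_M). -/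

import Mathlib

/-!
All four identities are equalities of linear maps on the four-dimensional space `H_I`, so it
suffices to compare both sides on the basis `f_∅, f_(1), f_(2), f_(1,2)`, on which `a_l` and `a_l*`
act by the Jordan–Wigner rule; the only sign that appears is `f_(2,1) = -f_(1,2)`.

For evenness, `U` and `U*` shift the particle number by one on each basis vector, so they
anticommute with `θ` on `H_I`. As `H_I` is invariant under `θ`, `U`, `U*` and the algebra `A(I)`,
the two signs cancel in `U* (θ a θ) U` and `U (θ a θ) U*`, and hence in any linear combination.
-/

noncomputable section
open scoped InnerProductSpace ComplexConjugate
open ContinuousLinearMap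

namespace Fermion

variable (L : Type) [Fintype L] [LinearOrder L]

/-- The fermionic Fock space over the one-particle space `h = ℓ²(L)`, realized concretely
via its orthonormal basis indexed by the finite subsets of `L` (the vectors `f_M`). -/
abbrev FockSpace := EuclideanSpace ℂ (Finset L)

variable {L}

/-- The vacuum vector `Ψ = f_∅`. -/
def vac : FockSpace L := EuclideanSpace.single ∅ 1

/-- Jordan–Wigner sign factor. -/
def jwSign (l : L) (S : Finset L) : ℂ := (-1 : ℂ) ^ (S.filter (fun k => k < l)).card

/-- The creation operator `a*_l = a*(e_l)`. -/
def cre (l : L) : FockSpace L →L[ℂ] FockSpace L :=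
  LinearMap.toContinuousLinearMap <|
    (EuclideanSpace.basisFun (Finset L) ℂ).toBasis.constr ℂ fun S =>
      if l ∈ S then 0 else jwSign l S • EuclideanSpace.single (insert l S) 1

/-- The annihilation operator `a_l = a(e_l)`. -/
def ann (l : L) : FockSpace L →L[ℂ] FockSpace L := ContinuousLinearMap.adjoint (cre l)

/-- The vector `f_{(l_1,…,l_n)} = a*_{l_1} ⋯ a*_{l_n} Ψ  (= P (e_{l_1} ⊗ ⋯ ⊗ e_{l_n}))`. -/
def fvec (M : List L) : FockSpace L := M.foldr (fun l v => cre l v) vac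

/-- The algebra `A(I)` : the unital *-subalgebra of `B(H)` generated by `{a_l : l ∈ I}`. -/
def A (I : Finset L) : StarSubalgebra ℂ (FockSpace L →L[ℂ] FockSpace L) :=
  StarAlgebra.adjoin ℂ (ann '' (I : Set L))

/-- The trace on `B(H)`. -/
def Tr (T : FockSpace L →L[ℂ] FockSpace L) : ℂ := LinearMap.trace ℂ (FockSpace L) T

/-- The rank-one operator `|x⟩⟨y|`. -/
def ketbra (x y : FockSpace L) : FockSpace L →L[ℂ] FockSpace L :=
  (ContinuousLinearMap.toSpanSingleton ℂ x).comp (innerSL ℂ y)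

/-- A valid choice of `D_I`: `D S` enumerates the finite set `S` without repetitions. -/
def IsEnum (D : Finset L → List L) : Prop := ∀ S : Finset L, (D S).Nodup ∧ (D S).toFinset = S

/-- The entangled vector `Φ = Σ_{M ∈ D_I} p_M^{1/2} f_{M ι(M)}`. -/
def Phi (D : Finset L → List L) (p : Finset L → ℝ) (I : Finset L) (ι : L → L) : FockSpace L :=
  ∑ S ∈ I.powerset, (Real.sqrt (p S) : ℂ) • fvec (D S ++ (D S).map ι)

/-- The state `φ(x) = ⟨Φ, xΦ⟩`. -/
def phi (D : Finset L → List L) (p : Finset L → ℝ) (I : Finset L) (ι : L → L)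
    (x : FockSpace L →L[ℂ] FockSpace L) : ℂ :=
  ⟪Phi D p I ι, x (Phi D p I ι)⟫_ℂ

end Fermion

namespace ContinuousLinearMap

section Span

variable {R E F : Type*} [Semiring R] [AddCommMonoid E] [Module R E] [TopologicalSpace E]
  [AddCommMonoid F] [Module R F] [TopologicalSpace F] {s : Set E}

theorem eqOn_span {T S : E →L[R] F} (h : Set.EqOn T S s) : Set.EqOn T S (Submodule.span R s) :=
  LinearMap.eqOn_span' (f := (T : E →ₗ[R] F)) h

theorem mapsTo_span_of_mapsTo {T : E →L[R] E} (h : Set.MapsTo T s (Submodule.span R s)) :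
    Set.MapsTo T (Submodule.span R s) (Submodule.span R s) := by
  simpa using Submodule.mapsTo_span (f := (T : E →ₗ[R] E)) h

end Span

theorem mapsTo_of_mem_starAlgebra_adjoin {E : Type*} [NormedAddCommGroup E] [InnerProductSpace ℂ E]
    [CompleteSpace E] {s : Set (E →L[ℂ] E)} {V : Submodule ℂ E}
    (hs : ∀ T ∈ s, Set.MapsTo T V V ∧ Set.MapsTo (⇑(star T)) V V) {a : E →L[ℂ] E}
    (ha : a ∈ StarAlgebra.adjoin ℂ s) : Set.MapsTo a V V := by
  suffices Set.MapsTo a V V ∧ Set.MapsTo (⇑(star a)) V V from this.1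
  induction ha using StarAlgebra.adjoin_induction with
  | mem T hT => exact hs T hT
  | algebraMap r =>
    rw [Algebra.algebraMap_eq_smul_one, star_smul, star_one]
    exact ⟨fun v hv => V.smul_mem r hv, fun v hv => V.smul_mem (star r) hv⟩
  | add x y _ _ hx hy =>
    rw [star_add]
    exact ⟨fun v hv => V.add_mem (hx.1 hv) (hy.1 hv), fun v hv => V.add_mem (hx.2 hv) (hy.2 hv)⟩
  | mul x y _ _ hx hy =>
    rw [star_mul]
    exact ⟨hx.1.comp hy.1, hy.2.comp hx.2⟩
  | star x _ hx => rw [star_star]; exact hx.symm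

section Parity

variable {E : Type*} [NormedAddCommGroup E] [NormedSpace ℂ E] {V : Submodule ℂ E}
  {θ W W' a : E →L[ℂ] E}

theorem conj_parity_conj_apply (hθV : Set.MapsTo θ V V) (haV : Set.MapsTo a V V)
    (hWV : Set.MapsTo W V V) (hW : Set.EqOn (⇑(θ * W)) (⇑(-(W * θ))) V)
    (hW' : Set.EqOn (⇑(θ * W')) (⇑(-(W' * θ))) V) {v : E} (hv : v ∈ V) :
    (W' * (θ * a * θ) * W) v = (θ * (W' * a * W) * θ) v := by
  have hx : a (W (θ v)) ∈ V := haV (hWV (hθV hv))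
  have hWv : θ (W v) = -W (θ v) := hW hv
  have hW'x : θ (W' (a (W (θ v)))) = -W' (θ (a (W (θ v)))) := hW' hx
  simp only [mul_apply_eq_comp, hWv, map_neg, hW'x]

theorem smul_conj_add_smul_conj_parity_apply (c d : ℂ) (hθV : Set.MapsTo θ V V)
    (haV : Set.MapsTo a V V) (hWV : Set.MapsTo W V V) (hW'V : Set.MapsTo W' V V)
    (hW : Set.EqOn (⇑(θ * W)) (⇑(-(W * θ))) V) (hW' : Set.EqOn (⇑(θ * W')) (⇑(-(W' * θ))) V)
    {v : E} (hv : v ∈ V) :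
    (c • (W' * (θ * a * θ) * W) + d • (W * (θ * a * θ) * W')) v
      = (θ * (c • (W' * a * W) + d • (W * a * W')) * θ) v := by
  have h₁ := conj_parity_conj_apply hθV haV hWV hW hW' hv
  have h₂ := conj_parity_conj_apply hθV haV hW'V hW' hW hv
  rw [add_apply, smul_apply, smul_apply, h₁, h₂]
  simp only [mul_apply_eq_comp, add_apply, smul_apply, map_add, map_smul]

end Parity

end ContinuousLinearMap

namespace Fermion

section JordanWigner

variable {L : Type} [LinearOrder L]

theorem star_jwSign (l : L) (S : Finset L) : star (jwSign l S) = jwSign l S := by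
  simp [jwSign]

theorem jwSign_empty (l : L) : jwSign l ∅ = 1 := by simp [jwSign]

theorem jwSign_mul_self (l : L) (S : Finset L) : jwSign l S * jwSign l S = 1 := by
  rw [jwSign, ← pow_add]
  exact Even.neg_one_pow ⟨_, rfl⟩

theorem jwSign_singleton (l k : L) : jwSign l {k} = if k < l then -1 else 1 := by
  by_cases h : k < l <;> simp [jwSign, Finset.filter_singleton, h]

theorem jwSign_singleton_mul_jwSign_singleton {l₁ l₂ : L} (hne : l₁ ≠ l₂) :
    jwSign l₁ {l₂} * jwSign l₂ {l₁} = -1 := by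
  rcases hne.lt_or_gt with h | h <;> simp [jwSign_singleton, h, h.not_gt]

end JordanWigner

section Fock

variable {L : Type} [Fintype L] [LinearOrder L]

theorem cre_single (l : L) (S : Finset L) :
    cre l (EuclideanSpace.single S (1 : ℂ)) =
      if l ∈ S then 0 else jwSign l S • EuclideanSpace.single (insert l S) (1 : ℂ) := by
  have hS : EuclideanSpace.single S (1 : ℂ) = (EuclideanSpace.basisFun (Finset L) ℂ).toBasis S := by
    simp
  rw [cre, LinearMap.coe_toContinuousLinearMap', hS, Module.Basis.constr_basis]

theorem ann_single (l : L) (S : Finset L) :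
    ann l (EuclideanSpace.single S (1 : ℂ)) =
      if l ∈ S then jwSign l (S.erase l) • EuclideanSpace.single (S.erase l) (1 : ℂ) else 0 := by
  ext T
  have hT : ann l (EuclideanSpace.single S (1 : ℂ)) T
      = ⟪cre l (EuclideanSpace.single T (1 : ℂ)), EuclideanSpace.single S (1 : ℂ)⟫_ℂ := by
    calc ann l (EuclideanSpace.single S (1 : ℂ)) T
        = ⟪EuclideanSpace.single T (1 : ℂ), ann l (EuclideanSpace.single S (1 : ℂ))⟫_ℂ := by
          simp [EuclideanSpace.inner_single_left]
      _ = _ := adjoint_inner_right _ _ _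
  rw [hT, cre_single]
  by_cases hlS : l ∈ S <;> by_cases hlT : l ∈ T
  · have : T ≠ S.erase l := fun h => Finset.notMem_erase l S (h ▸ hlT)
    simp [hlS, hlT, this]
  · by_cases hTS : T = S.erase l
    · subst hTS
      simp [hlS, Finset.insert_erase hlS, star_jwSign]
    · have : insert l T ≠ S := fun h => hTS (by rw [← h, Finset.erase_insert hlT])
      simp [hlS, hlT, hTS, this, EuclideanSpace.inner_single_left]
  · simp [hlS, hlT]
  · have : insert l T ≠ S := fun h => hlS (h ▸ Finset.mem_insert_self l T)
    simp [hlS, hlT, this, EuclideanSpace.inner_single_left]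


theorem fvec_nil : fvec ([] : List L) = EuclideanSpace.single ∅ (1 : ℂ) := rfl

theorem fvec_singleton (l : L) : fvec [l] = EuclideanSpace.single {l} (1 : ℂ) := by
  simp [fvec, vac, cre_single, jwSign_empty]

theorem fvec_pair {l₁ l₂ : L} (hne : l₁ ≠ l₂) :
    fvec [l₁, l₂] = jwSign l₁ {l₂} • EuclideanSpace.single {l₁, l₂} (1 : ℂ) := by
  rw [show fvec [l₁, l₂] = cre l₁ (fvec [l₂]) from rfl, fvec_singleton, cre_single,
    if_neg (by simpa using hne)]

theorem star_ann (l : L) : star (ann l) = cre l := by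
  rw [ann, star_eq_adjoint, adjoint_adjoint]

theorem cre_fvec_nil (l : L) : cre l (fvec []) = fvec [l] := rfl

theorem cre_fvec_singleton (l l' : L) : cre l (fvec [l']) = fvec [l, l'] := rfl

theorem cre_fvec_singleton_self (l : L) : cre l (fvec [l]) = 0 := by
  simp [fvec_singleton, cre_single]

theorem ann_fvec_nil (l : L) : ann l (fvec []) = 0 := by
  simp [fvec_nil, ann_single]

theorem ann_fvec_singleton_self (l : L) : ann l (fvec [l]) = fvec [] := by
  simp [fvec_singleton, fvec_nil, ann_single, jwSign_empty]

section TwoModes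

variable {l₁ l₂ : L}

theorem cre_fvec_singleton_swap (hne : l₁ ≠ l₂) : cre l₂ (fvec [l₁]) = -fvec [l₁, l₂] := by
  have hsign : jwSign l₂ {l₁} = -jwSign l₁ {l₂} := by
    rw [← mul_neg_one, ← jwSign_singleton_mul_jwSign_singleton hne, ← mul_assoc,
      jwSign_mul_self, one_mul]
  rw [fvec_singleton, cre_single, if_neg (by simpa using hne.symm), fvec_pair hne,
    Finset.pair_comm, hsign, neg_smul]

theorem cre_fvec_pair_left (hne : l₁ ≠ l₂) : cre l₁ (fvec [l₁, l₂]) = 0 := by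
  simp [fvec_pair hne, cre_single]

theorem cre_fvec_pair_right (hne : l₁ ≠ l₂) : cre l₂ (fvec [l₁, l₂]) = 0 := by
  simp [fvec_pair hne, cre_single]

theorem ann_fvec_singleton_of_ne (hne : l₁ ≠ l₂) : ann l₁ (fvec [l₂]) = 0 := by
  simp [fvec_singleton, ann_single, hne]

theorem ann_fvec_pair_left (hne : l₁ ≠ l₂) : ann l₁ (fvec [l₁, l₂]) = fvec [l₂] := by
  simp [fvec_pair hne, fvec_singleton, ann_single, hne, smul_smul,
    jwSign_mul_self]

theorem ann_fvec_pair_right (hne : l₁ ≠ l₂) : ann l₂ (fvec [l₁, l₂]) = -fvec [l₁] := by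
  simp [fvec_pair hne, fvec_singleton, ann_single, Finset.erase_insert_of_ne hne, smul_smul,
    jwSign_singleton_mul_jwSign_singleton hne]

end TwoModes

end Fock

section TwoModeSpace

variable {L : Type} [Fintype L] [LinearOrder L] {l₁ l₂ : L}

def twoModeVectors (l₁ l₂ : L) : Set (FockSpace L) :=
  {fvec [], fvec [l₁], fvec [l₂], fvec [l₁, l₂]}

theorem mapsTo_span_twoModeVectors_of_mem_A (hne : l₁ ≠ l₂) {a : FockSpace L →L[ℂ] FockSpace L}
    (ha : a ∈ A {l₁, l₂}) :
    Set.MapsTo a (Submodule.span ℂ (twoModeVectors l₁ l₂))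
      (Submodule.span ℂ (twoModeVectors l₁ l₂)) := by
  refine mapsTo_of_mem_starAlgebra_adjoin ?_ ha
  rintro _ ⟨l, hl, rfl⟩
  simp only [Finset.coe_insert, Finset.coe_singleton, Set.mem_insert_iff,
    Set.mem_singleton_iff] at hl
  rw [star_ann]
  constructor <;> apply mapsTo_span_of_mapsTo <;>
    rcases hl with hl | hl <;> subst l <;> rintro x (rfl | rfl | rfl | rfl) <;>
    simp [ann_fvec_nil, ann_fvec_singleton_self, ann_fvec_singleton_of_ne hne,
      ann_fvec_singleton_of_ne hne.symm, ann_fvec_pair_left hne, ann_fvec_pair_right hne,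
      cre_fvec_nil, cre_fvec_singleton_self, cre_fvec_singleton l₁ l₂, cre_fvec_singleton_swap hne,
      cre_fvec_pair_left hne, cre_fvec_pair_right hne, Submodule.mem_span_of_mem, twoModeVectors]

end TwoModeSpace

/-- Let `I = {1,2} ⊆ L` (two distinct sites `l₁, l₂`), let `H_I` be the
subspace of `H` spanned by `{f_∅, f_{(1)}, f_{(2)}, f_{(1,2)}}`, and let `U_I : H_I → H_I` be
the unitary with `U_I f_∅ = f_{(1)}`, `U_I f_{(1)} = f_{(1,2)}`, `U_I f_{(1,2)} = f_{(2)}`,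
`U_I f_{(2)} = f_∅` (here `U` is an operator on `H` implementing `U_I` on `H_I`, with `U*`
implementing `U_I*`). Then, identifying elements of `A(I)` with their restrictions to `H_I`:
`U_I* a₁ U_I = a₂*[a₁,a₁*]`, `U_I a₁ U_I* = a₂[a₁,a₁*]`, `U_I* a₂ U_I = a₁[a₂*,a₂]` and
`U_I a₂ U_I* = a₁*[a₂,a₂*]`. Moreover, for any `λ ∈ [0,1]` the map
`α(a) = λ U_I* a U_I + (1-λ) U_I a U_I*` on `A(I)|_{H_I}` is even: it commutes with
conjugation by the parity operator `θ|_{H_I}` (`θ f_M = (-1)^{|M|} f_M`). -/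
theorem four_cycle_dynamics_formulas_and_even
    {L : Type} [Fintype L] [LinearOrder L]
    (l₁ l₂ : L) (hne : l₁ ≠ l₂)
    (U : FockSpace L →L[ℂ] FockSpace L)
    (hU1 : U (fvec ([] : List L)) = fvec [l₁])
    (hU2 : U (fvec [l₁]) = fvec [l₁, l₂])
    (hU3 : U (fvec [l₁, l₂]) = fvec [l₂])
    (hU4 : U (fvec [l₂]) = fvec ([] : List L))
    (hUs1 : star U (fvec [l₁]) = fvec ([] : List L))
    (hUs2 : star U (fvec [l₁, l₂]) = fvec [l₁])
    (hUs3 : star U (fvec [l₂]) = fvec [l₁, l₂])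
    (hUs4 : star U (fvec ([] : List L)) = fvec [l₂])
    (θ : FockSpace L →L[ℂ] FockSpace L)
    (hθ : ∀ M : List L, θ (fvec M) = ((-1 : ℂ) ^ M.length) • fvec M) :
    (∀ v ∈ Submodule.span ℂ {fvec ([] : List L), fvec [l₁], fvec [l₂], fvec [l₁, l₂]},
      (star U * ann l₁ * U) v
        = (star (ann l₂) * (ann l₁ * star (ann l₁) - star (ann l₁) * ann l₁)) v) ∧
    (∀ v ∈ Submodule.span ℂ {fvec ([] : List L), fvec [l₁], fvec [l₂], fvec [l₁, l₂]},
      (U * ann l₁ * star U) v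
        = (ann l₂ * (ann l₁ * star (ann l₁) - star (ann l₁) * ann l₁)) v) ∧
    (∀ v ∈ Submodule.span ℂ {fvec ([] : List L), fvec [l₁], fvec [l₂], fvec [l₁, l₂]},
      (star U * ann l₂ * U) v
        = (ann l₁ * (star (ann l₂) * ann l₂ - ann l₂ * star (ann l₂))) v) ∧
    (∀ v ∈ Submodule.span ℂ {fvec ([] : List L), fvec [l₁], fvec [l₂], fvec [l₁, l₂]},
      (U * ann l₂ * star U) v
        = (star (ann l₁) * (ann l₂ * star (ann l₂) - star (ann l₂) * ann l₂)) v) ∧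
    (∀ lam : ℝ, 0 ≤ lam → lam ≤ 1 →
      ∀ a ∈ A ({l₁, l₂} : Finset L),
        ∀ v ∈ Submodule.span ℂ {fvec ([] : List L), fvec [l₁], fvec [l₂], fvec [l₁, l₂]},
          ((lam : ℂ) • (star U * (θ * a * θ) * U)
              + ((1 - lam : ℝ) : ℂ) • (U * (θ * a * θ) * star U)) v
            = (θ * ((lam : ℂ) • (star U * a * U)
              + ((1 - lam : ℝ) : ℂ) • (U * a * star U)) * θ) v) := by
  have hθ₀ : θ (fvec []) = fvec [] := by simpa using hθ []
  have hθ₁ : θ (fvec [l₁]) = -fvec [l₁] := by simpa using hθ [l₁]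
  have hθ₂ : θ (fvec [l₂]) = -fvec [l₂] := by simpa using hθ [l₂]
  have hθ₁₂ : θ (fvec [l₁, l₂]) = fvec [l₁, l₂] := by simpa using hθ [l₁, l₂]
  simp only [star_ann]
  refine ⟨eqOn_span ?_, eqOn_span ?_, eqOn_span ?_, eqOn_span ?_, fun lam _ _ a ha v hv =>
    smul_conj_add_smul_conj_parity_apply _ _ (mapsTo_span_of_mapsTo ?_)
      (mapsTo_span_twoModeVectors_of_mem_A hne ha) (mapsTo_span_of_mapsTo ?_)
      (mapsTo_span_of_mapsTo ?_) (eqOn_span ?_) (eqOn_span ?_) hv⟩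
  all_goals rintro x (rfl | rfl | rfl | rfl)
  all_goals simp [ann_fvec_nil, ann_fvec_singleton_self, ann_fvec_singleton_of_ne hne,
    ann_fvec_singleton_of_ne hne.symm, ann_fvec_pair_left hne, ann_fvec_pair_right hne,
    cre_fvec_nil, cre_fvec_singleton_self, cre_fvec_singleton l₁ l₂, cre_fvec_singleton_swap hne,
    cre_fvec_pair_left hne, cre_fvec_pair_right hne, hU1, hU2, hU3, hU4, hUs1, hUs2, hUs3, hUs4,
    hθ₀, hθ₁, hθ₂, hθ₁₂, Submodule.mem_span_of_mem, twoModeVectors]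

end Fermion
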